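/- Let Q be the 3×3 grid with boundary cycle C (the 8-cycle on all vertices except the center), and let x0 = (3,3). If s1, s2, s3 are three distinct vertices of Q belonging to three distinct terminal pairs, all lying on C, and s3 does not lie on the s1–s2 path P ⊆ C through x0, then there exists a path from s3 to the center vertex (2,2) that is edge-disjoint from P. -/

import Mathlib

open SimpleGraph

/-- The grid graph `Pm □ Pk` (0-indexed coordinates): `(i,j)` and `(p,q)` are
adjacent iff `|i-p| + |j-q| = 1`. -/
def grid (m k : ℕ) : SimpleGraph (Fin m × Fin k) where
  Adj u v := ((u.1 : ℤ) - v.1).natAbs + ((u.2 : ℤ) - v.2).natAbs = 1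
  symm := ⟨by intro u v h; omega⟩
  loopless := ⟨by intro u h; simp at h⟩

abbrev V33 := Fin 3 × Fin 3

/-! Every vertex of the 3×3 grid is joined to the center by a path with at most
two edges, so each of its edges contains `s3` or the center. Neither vertex lies on `P`,
hence no edge of this path is an edge of `P`. -/

namespace SimpleGraph.Walk

variable {V : Type*} {G : SimpleGraph V}

theorem edges_disjoint_of_forall_exists_notMem_support {a b c d : V} (p : G.Walk a b)
    (q : G.Walk c d) (h : ∀ e ∈ q.edges, ∃ v ∈ e, v ∉ p.support) :
    p.edges.Disjoint q.edges := fun e hp hq =>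
  let ⟨_, hv, hvp⟩ := h e hq
  hvp (mem_support_of_mem_edges hp hv)

theorem endpoint_mem_of_mem_edges_of_length_le_two {u v : V} (q : G.Walk u v)
    (hq : q.length ≤ 2) : ∀ e ∈ q.edges, u ∈ e ∨ v ∈ e := by
  match q, hq with
  | nil, _ => simp
  | cons _ nil, _ => simp
  | cons _ (cons _ nil), _ => simp
  | cons _ (cons _ (cons _ _)), hq => simp at hq

end SimpleGraph.Walk

instance : DecidableRel (grid 3 3).Adj := fun u v => by
  unfold grid; exact inferInstanceAs (Decidable (_ = 1))

theorem grid33_eq_or_adj_or_adj_adj_center (s : V33) :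
    s = (1, 1) ∨ (grid 3 3).Adj s (1, 1) ∨ ∃ m, (grid 3 3).Adj s m ∧ (grid 3 3).Adj m (1, 1) := by
  revert s; decide

theorem grid33_exists_path_to_center_length_le_two (s : V33) :
    ∃ q : (grid 3 3).Walk s (1, 1), q.IsPath ∧ q.length ≤ 2 := by
  suffices ∃ w : (grid 3 3).Walk s (1, 1), w.length ≤ 2 from
    let ⟨w, hw⟩ := this
    ⟨w.bypass, w.bypass_isPath, w.length_bypass_le_length.trans hw⟩
  rcases grid33_eq_or_adj_or_adj_adj_center s with rfl | hadj | ⟨m, hsm, hmc⟩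
  · exact ⟨Walk.nil, by simp⟩
  · exact ⟨Walk.cons hadj Walk.nil, by simp⟩
  · exact ⟨Walk.cons hsm (Walk.cons hmc Walk.nil), by simp⟩

theorem mate_to_center_general (s1 s2 s3 : V33)
    (p : (grid 3 3).Walk s1 s2)
    (hcenter : ((1, 1) : V33) ∉ p.support)
    (hs3 : s3 ∉ p.support) :
    ∃ q : (grid 3 3).Walk s3 ((1, 1) : V33), q.IsPath ∧ p.edges.Disjoint q.edges := by
  obtain ⟨q, hq, hlen⟩ := grid33_exists_path_to_center_length_le_two s3
  refine ⟨q, hq, p.edges_disjoint_of_forall_exists_notMem_support q fun e he => ?_⟩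
  rcases q.endpoint_mem_of_mem_edges_of_length_le_two hlen e he with h | h
  · exact ⟨s3, h, hs3⟩
  · exact ⟨(1, 1), h, hcenter⟩

/-- if `s1, s2, s3` are distinct vertices on the boundary cycle of the
3×3 grid and `P` is the `s1–s2` arc of the boundary cycle through `x0 = (3,3)`
missing `s3`, then `s3` can be mated to the center by a path edge-disjoint from `P`. -/
theorem mate_to_center (s1 s2 s3 : V33)
    (h12 : s1 ≠ s2) (h13 : s1 ≠ s3) (h23 : s2 ≠ s3)
    (hb1 : s1 ≠ ((1, 1) : V33)) (hb2 : s2 ≠ ((1, 1) : V33)) (hb3 : s3 ≠ ((1, 1) : V33))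
    (p : (grid 3 3).Walk s1 s2) (hp : p.IsPath)
    (hcenter : ((1, 1) : V33) ∉ p.support)
    (hx0 : ((2, 2) : V33) ∈ p.support)
    (hs3 : s3 ∉ p.support) :
    ∃ q : (grid 3 3).Walk s3 ((1, 1) : V33), q.IsPath ∧ p.edges.Disjoint q.edges :=
  mate_to_center_general s1 s2 s3 p hcenter hs3
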